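/- Let (φ, y, ρ, H) be a solution of the flat FLRW system on I = [t₀, T) (T ≤ ∞) satisfying the Friedmann constraint at every t ∈ I, with ρ(t) ≥ 0 on I. Suppose that φ(t) → +∞ as t → T⁻ and that V(ψ) → 0 as ψ → +∞. Then the (possibly infinite) limit H_∞ = lim_{t→T⁻} H(t) exists and satisfies H_∞ ≤ 0. -/

import Mathlib

open Real Set Filter

/-- A solution of the flat FLRW system on the set `I`:
`φ' = y`, `y' = -3Hy - V'(φ) + α(φ)ρ`, `ρ' = -ρ(3γH + α(φ)y)`, `H' = -(1/2)(y² + γρ)`. -/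
def IsFLRWSolution (γ : ℝ) (α V : ℝ → ℝ) (I : Set ℝ) (φ y ρ H : ℝ → ℝ) : Prop :=
  ∀ t ∈ I,
    HasDerivWithinAt φ (y t) I t ∧
    HasDerivWithinAt y (-3 * H t * y t - deriv V (φ t) + α (φ t) * ρ t) I t ∧
    HasDerivWithinAt ρ (-(ρ t) * (3 * γ * H t + α (φ t) * y t)) I t ∧
    HasDerivWithinAt H (-(1/2) * (y t ^ 2 + γ * ρ t)) I t

/-- The Friedmann constraint `3H² = (1/2)y² + V(φ) + ρ` at time `t`. -/
def FriedmannConstraint (V : ℝ → ℝ) (φ y ρ H : ℝ → ℝ) (t : ℝ) : Prop :=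
  3 * H t ^ 2 = (1/2) * y t ^ 2 + V (φ t) + ρ t

/-- The interval `[t₀, T)` with possibly infinite right endpoint `T : EReal`. -/
def IcoE (t₀ : ℝ) (T : EReal) : Set ℝ := {t : ℝ | t₀ ≤ t ∧ (t : EReal) < T}

/-- The filter of real times `t → T⁻` (this is `𝓝[<] T` for finite `T`, and `atTop`
for `T = ⊤`). -/
noncomputable def leftLimFilter (T : EReal) : Filter ℝ :=
  Filter.comap (fun t : ℝ => (t : EReal)) (nhdsWithin T (Set.Iio T))

/-- The solution `(φ, y, ρ, H)` on `[t₀, T)` extends to a solution of the same system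
on the set `J`. -/
def ExtendsSol (γ : ℝ) (α V : ℝ → ℝ) (t₀ : ℝ) (T : EReal)
    (φ y ρ H : ℝ → ℝ) (J : Set ℝ) : Prop :=
  ∃ φ' y' ρ' H' : ℝ → ℝ,
    IsFLRWSolution γ α V J φ' y' ρ' H' ∧
    Set.EqOn φ φ' (IcoE t₀ T) ∧ Set.EqOn y y' (IcoE t₀ T) ∧
    Set.EqOn ρ ρ' (IcoE t₀ T) ∧ Set.EqOn H H' (IcoE t₀ T)

/-- A solution on `[t₀, T)` is right-maximal if it can be extended neither to a solution
on `[t₀, T]` (when `T` is finite) nor to a solution on `[t₀, T')` for some `T' > T`. -/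
def RightMaximal (γ : ℝ) (α V : ℝ → ℝ) (t₀ : ℝ) (T : EReal)
    (φ y ρ H : ℝ → ℝ) : Prop :=
  ¬ ((T ≠ ⊤ ∧ ExtendsSol γ α V t₀ T φ y ρ H (Set.Icc t₀ T.toReal)) ∨
     (∃ T' : EReal, T < T' ∧ ExtendsSol γ α V t₀ T φ y ρ H (IcoE t₀ T')))

/-! Since `H' = -(y² + γρ)/2 ≤ 0`, `H` is nonincreasing and tends to its infimum `H_∞`.
If `H_∞ > 0`, pick `0 < h < H_∞`; then `H ≥ h` throughout, while `V(φ) < h²` near `T`.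
There the Friedmann constraint bounds the dissipation `y² + γρ = -2H'` below by a constant
`c > 0`, and together with `y ≤ (y² + 1)/2` this makes `φ + (1 + 1/c) H` nonincreasing.
As `H ≥ h`, `φ` stays bounded, contradicting `φ → +∞`. -/

open scoped Topology

lemma antitoneOn_of_hasDerivWithinAt_self_nonpos {S : Set ℝ} (hS : Convex ℝ S) {f f' : ℝ → ℝ}
    (hf : ∀ t ∈ S, HasDerivWithinAt f (f' t) S t) (hf' : ∀ t ∈ S, f' t ≤ 0) :
    AntitoneOn f S :=
  antitoneOn_of_hasDerivWithinAt_nonpos hS (fun t ht => (hf t ht).continuousWithinAt)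
    (fun t ht => (hf t (interior_subset ht)).mono interior_subset)
    (fun t ht => hf' t (interior_subset ht))

theorem AntitoneOn.tendsto_biInf {β α : Type*} [Preorder β] [CompleteLinearOrder α]
    [TopologicalSpace α] [OrderTopology α] {f : β → α} {I : Set β} {L : Filter β}
    (hf : AntitoneOn f I) (hI : I ∈ L) (htail : ∀ s ∈ I, ∀ᶠ t in L, s ≤ t) :
    Tendsto f L (𝓝 (⨅ t ∈ I, f t)) := by
  refine tendsto_order.2 ⟨fun a ha => ?_, fun b hb => ?_⟩
  · filter_upwards [hI] with t ht using ha.trans_le (iInf₂_le t ht)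
  · obtain ⟨s, hs⟩ := iInf_lt_iff.1 hb
    obtain ⟨hsI, hsb⟩ := iInf_lt_iff.1 hs
    filter_upwards [hI, htail s hsI] with t ht hst using (hf hsI ht hst).trans_lt hsb

lemma ordConnected_IcoE (t₀ : ℝ) (T : EReal) : (IcoE t₀ T).OrdConnected :=
  ⟨fun _ hx _ hy _ ht => ⟨hx.1.trans ht.1, (EReal.coe_le_coe_iff.2 ht.2).trans_lt hy.2⟩⟩

lemma IcoE_subset_IcoE {t₀ s : ℝ} {T : EReal} (hs : s ∈ IcoE t₀ T) : IcoE s T ⊆ IcoE t₀ T :=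
  fun _ ht => ⟨hs.1.trans ht.1, ht.2⟩

lemma hasBasis_leftLimFilter {t₀ : ℝ} {T : EReal} (hT : (t₀ : EReal) < T) :
    (leftLimFilter T).HasBasis (· ∈ IcoE t₀ T) (IcoE · T) := by
  refine ((nhdsLT_basis_of_exists_lt ⟨_, hT⟩).comap _).to_hasBasis (fun b hb => ?_)
    fun s hs => ⟨s, hs.2, fun t ht => ⟨(EReal.coe_lt_coe_iff.1 ht.1).le, ht.2⟩⟩
  obtain ⟨s, hbs, hsT⟩ := EReal.lt_iff_exists_real_btwn.1 (max_lt hb hT)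
  refine ⟨s, ⟨EReal.coe_le_coe_iff.1 ((le_max_right _ _).trans hbs.le), hsT⟩, fun t ht => ?_⟩
  exact ⟨((le_max_left _ _).trans_lt hbs).trans_le (EReal.coe_le_coe_iff.2 ht.1), ht.2⟩

lemma min_mul_sq_le_dissipation {γ h H y ρ v : ℝ} (hγ : 0 ≤ γ) (hρ : 0 ≤ ρ) (hh : 0 ≤ h)
    (hH : h ≤ H) (hv : v < h ^ 2) (hcon : 3 * H ^ 2 = 1 / 2 * y ^ 2 + v + ρ) :
    min 1 γ * h ^ 2 ≤ y ^ 2 + γ * ρ := by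
  have hm : 0 ≤ min 1 γ := le_min zero_le_one hγ
  have hsum : h ^ 2 ≤ y ^ 2 + ρ := by nlinarith
  calc min 1 γ * h ^ 2 ≤ min 1 γ * (y ^ 2 + ρ) := mul_le_mul_of_nonneg_left hsum hm
    _ ≤ y ^ 2 + γ * ρ := by
      nlinarith [min_le_left 1 γ, min_le_right 1 γ, sq_nonneg y]

lemma le_one_add_inv_mul_div_two {y D c : ℝ} (hc : 0 < c) (hcD : c ≤ D) (hyD : y ^ 2 ≤ D) :
    y ≤ (1 + c⁻¹) * D / 2 := by
  have h1 : 1 ≤ D * c⁻¹ := by rw [← div_eq_mul_inv, one_le_div hc]; exact hcD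
  nlinarith [sq_nonneg (y - 1)]

namespace IsFLRWSolution

variable {γ : ℝ} {α V : ℝ → ℝ} {I S : Set ℝ} {φ y ρ H : ℝ → ℝ}

lemma mono (hsol : IsFLRWSolution γ α V I φ y ρ H) (hS : S ⊆ I) :
    IsFLRWSolution γ α V S φ y ρ H := fun t ht =>
  let ⟨hφ, hy, hρ, hH⟩ := hsol t (hS ht)
  ⟨hφ.mono hS, hy.mono hS, hρ.mono hS, hH.mono hS⟩

lemma antitoneOn_hubble (hsol : IsFLRWSolution γ α V S φ y ρ H) (hS : Convex ℝ S)
    (hγ : 0 ≤ γ) (hρ : ∀ t ∈ S, 0 ≤ ρ t) : AntitoneOn H S :=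
  antitoneOn_of_hasDerivWithinAt_self_nonpos hS (fun t ht => (hsol t ht).2.2.2) fun t ht => by
    nlinarith [sq_nonneg (y t), mul_nonneg hγ (hρ t ht)]

lemma exists_antitoneOn_add_mul_hubble (hsol : IsFLRWSolution γ α V S φ y ρ H)
    (hS : Convex ℝ S) (hcon : ∀ t ∈ S, FriedmannConstraint V φ y ρ H t)
    (hρ : ∀ t ∈ S, 0 ≤ ρ t) (hγ : 0 < γ) {h : ℝ} (hh : 0 < h) (hH : ∀ t ∈ S, h ≤ H t)
    (hV : ∀ t ∈ S, V (φ t) < h ^ 2) :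
    ∃ K, 0 ≤ K ∧ AntitoneOn (fun t => φ t + K * H t) S := by
  set c := min 1 γ * h ^ 2
  have hc : 0 < c := mul_pos (lt_min one_pos hγ) (pow_pos hh 2)
  refine ⟨1 + c⁻¹, by positivity, antitoneOn_of_hasDerivWithinAt_self_nonpos hS
    (fun t ht => (hsol t ht).1.add ((hsol t ht).2.2.2.const_mul _)) fun t ht => ?_⟩
  have hdiss : c ≤ y t ^ 2 + γ * ρ t :=
    min_mul_sq_le_dissipation hγ.le (hρ t ht) hh.le (hH t ht) (hV t ht) (hcon t ht)
  have hy : y t ^ 2 ≤ y t ^ 2 + γ * ρ t := le_add_of_nonneg_right (mul_nonneg hγ.le (hρ t ht))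
  have := le_one_add_inv_mul_div_two hc hdiss hy
  linarith

end IsFLRWSolution

theorem flrw_Hinfty_nonpositive_general
    (γ : ℝ) (hγ : 0 < γ)
    (α V : ℝ → ℝ)
    (t₀ : ℝ) (T : EReal) (hT : (t₀ : EReal) < T)
    (φ y ρ H : ℝ → ℝ)
    (hsol : IsFLRWSolution γ α V (IcoE t₀ T) φ y ρ H)
    (hcon : ∀ t ∈ IcoE t₀ T, FriedmannConstraint V φ y ρ H t)
    (hρ : ∀ t ∈ IcoE t₀ T, 0 ≤ ρ t)
    (hφ : Tendsto φ (leftLimFilter T) atTop)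
    (hVlim : Tendsto V atTop (nhds 0)) :
    ∃ Hinf : EReal, Hinf ≤ 0 ∧
      Tendsto (fun t => (H t : EReal)) (leftLimFilter T) (nhds Hinf) := by
  have hL := hasBasis_leftLimFilter hT
  have hmem (s) (hs : s ∈ IcoE t₀ T) : IcoE s T ∈ leftLimFilter T := hL.mem_of_mem hs
  have htail (s) (hs : s ∈ IcoE t₀ T) : ∀ᶠ t in leftLimFilter T, s ≤ t :=
    mem_of_superset (hmem s hs) fun _ ht => ht.1
  have hanti := hsol.antitoneOn_hubble (ordConnected_IcoE t₀ T).convex hγ.le hρ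
  refine ⟨_, ?_, (EReal.coe_strictMono.monotone.comp_antitoneOn hanti).tendsto_biInf
    (hmem t₀ ⟨le_rfl, hT⟩) htail⟩
  by_contra! hpos
  obtain ⟨h, hh0, hh⟩ := EReal.lt_iff_exists_real_btwn.1 hpos
  replace hh0 : 0 < h := EReal.coe_pos.1 hh0
  have hHh (t) (ht : t ∈ IcoE t₀ T) : h ≤ H t :=
    EReal.coe_le_coe_iff.1 (hh.le.trans (iInf₂_le t ht))
  obtain ⟨s, hs, hsV⟩ :=
    hL.eventually_iff.1 ((hVlim.comp hφ).eventually (gt_mem_nhds (pow_pos hh0 2)))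
  have hsub := IcoE_subset_IcoE hs
  obtain ⟨K, hK, hlyap⟩ := (hsol.mono hsub).exists_antitoneOn_add_mul_hubble
    (ordConnected_IcoE s T).convex (fun t ht => hcon t (hsub ht)) (fun t ht => hρ t (hsub ht))
    hγ hh0 (fun t ht => hHh t (hsub ht)) hsV
  have : (leftLimFilter T).NeBot := hL.neBot_iff.2 fun {s} hs => ⟨s, le_rfl, hs.2⟩
  obtain ⟨t, hφt, ht⟩ :=
    ((hφ.eventually_gt_atTop (φ s + K * (H s - h))).and (hmem s hs)).exists
  have hφs := hlyap ⟨le_rfl, hs.2⟩ ht ht.1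
  have := mul_le_mul_of_nonneg_left (hHh t (hsub ht)) hK
  linarith

/-- if `φ(t) → +∞` as `t → T⁻` and `V(ψ) → 0` as `ψ → +∞`, then the
(possibly infinite) limit `H_∞` of the Hubble function as `t → T⁻` exists and is `≤ 0`. -/
theorem flrw_Hinfty_nonpositive
    (γ : ℝ) (hγ : 0 < γ)
    (α V : ℝ → ℝ) (hα : Continuous α) (hV : ContDiff ℝ 2 V)
    (t₀ : ℝ) (T : EReal) (hT : (t₀ : EReal) < T)
    (φ y ρ H : ℝ → ℝ)
    (hsol : IsFLRWSolution γ α V (IcoE t₀ T) φ y ρ H)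
    (hcon : ∀ t ∈ IcoE t₀ T, FriedmannConstraint V φ y ρ H t)
    (hρ : ∀ t ∈ IcoE t₀ T, 0 ≤ ρ t)
    (hφ : Tendsto φ (leftLimFilter T) atTop)
    (hVlim : Tendsto V atTop (nhds 0)) :
    ∃ Hinf : EReal, Hinf ≤ 0 ∧
      Tendsto (fun t => (H t : EReal)) (leftLimFilter T) (nhds Hinf) :=
  flrw_Hinfty_nonpositive_general γ hγ α V t₀ T hT φ y ρ H hsol hcon hρ hφ hVlim
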